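/- Every nonzero nonunit element z of R is an associate (i.e., equal up to multiplication by a unit of R) of exactly one element of the following list: x^α for some integer α ≥ 1, y^β for some integer β ≥ 1, or x^α + a·y^β for some integers α, β ≥ 1 and some a ∈ ℂ with a ≠ 0; moreover in the mixed case the triple (α, β, a) is uniquely determined by z. -/

import Mathlib

noncomputable section

open MvPolynomial

/-- The polynomial ring `ℂ[x,y]`. -/
abbrev Pc : Type := MvPolynomial (Fin 2) ℂ

/-- The ideal `(xy)` of `ℂ[x,y]`. -/
def nodeIdeal : Ideal Pc := Ideal.span {X 0 * X 1}

/-- The affine coordinate ring `ℂ[x,y]/(xy)` of the node. -/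
abbrev Anode : Type := Pc ⧸ nodeIdeal

/-- The class of `x` in `ℂ[x,y]/(xy)`. -/
def xA : Anode := Ideal.Quotient.mk nodeIdeal (X 0)

/-- The class of `y` in `ℂ[x,y]/(xy)`. -/
def yA : Anode := Ideal.Quotient.mk nodeIdeal (X 1)

/-- The maximal ideal `(x,y)` of `ℂ[x,y]/(xy)`. -/
def mA : Ideal Anode := Ideal.span {xA, yA}

/-- Evaluation of polynomials at the origin. -/
def evalO : Pc →+* ℂ := (aeval (fun _ => (0:ℂ)) : Pc →ₐ[ℂ] ℂ).toRingHom

lemma node_le_ker : nodeIdeal ≤ RingHom.ker evalO := by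
  rw [nodeIdeal, Ideal.span_le, Set.singleton_subset_iff]
  simp [evalO, RingHom.mem_ker]

/-- Evaluation at the origin, descended to `ℂ[x,y]/(xy)`. -/
def εA : Anode →+* ℂ := Ideal.Quotient.lift nodeIdeal evalO node_le_ker

lemma sub_const_mem (p : Pc) :
    p - C (constantCoeff p) ∈ (Ideal.span {(X 0 : Pc), X 1}) := by
  induction p using MvPolynomial.induction_on with
  | C a => simp
  | add p q hp hq =>
      have : p + q - C (constantCoeff (p + q)) =
          (p - C (constantCoeff p)) + (q - C (constantCoeff q)) := by
        rw [map_add, map_add]; ring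
      rw [this]; exact Ideal.add_mem _ hp hq
  | mul_X p i hp =>
      have h0 : constantCoeff (p * X i) = 0 := by
        rw [map_mul, constantCoeff_X, mul_zero]
      rw [h0, map_zero, sub_zero]
      refine Ideal.mul_mem_left _ p (Ideal.subset_span ?_)
      fin_cases i <;> simp

lemma mA_eq_ker : mA = RingHom.ker εA := by
  apply le_antisymm
  · rw [mA, Ideal.span_le]
    rintro z hz
    simp only [Set.mem_insert_iff, Set.mem_singleton_iff] at hz
    rcases hz with rfl | rfl <;>
      simp [RingHom.mem_ker, xA, yA, εA, evalO, Ideal.Quotient.lift_mk]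
  · intro z hz
    obtain ⟨p, rfl⟩ := Ideal.Quotient.mk_surjective z
    have hev : constantCoeff p = 0 := by
      have : εA (Ideal.Quotient.mk nodeIdeal p) = evalO p := rfl
      rw [RingHom.mem_ker, this] at hz
      simpa [evalO] using hz
    have hp : p ∈ (Ideal.span {(X 0 : Pc), X 1}) := by
      have := sub_const_mem p
      rwa [hev, map_zero, sub_zero] at this
    have : Ideal.Quotient.mk nodeIdeal p ∈
        Ideal.map (Ideal.Quotient.mk nodeIdeal) (Ideal.span {(X 0 : Pc), X 1}) :=
      Ideal.mem_map_of_mem _ hp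
    rwa [Ideal.map_span, Set.image_insert_eq, Set.image_singleton] at this

instance : mA.IsPrime := mA_eq_ker ▸ RingHom.ker_isPrime εA

/-- `R`, the localization of `ℂ[x,y]/(xy)` at the maximal ideal `(x,y)`. -/
abbrev Rnode : Type := Localization.AtPrime mA

/-- The element `x` of `R`. -/
def x : Rnode := algebraMap Anode Rnode xA

/-- The element `y` of `R`. -/
def y : Rnode := algebraMap Anode Rnode yA

instance : Algebra ℂ Rnode :=
  ((algebraMap Anode Rnode).comp (algebraMap ℂ Anode)).toAlgebra

/-!
Every element of `ℂ[x,y]/(xy)` is `c + x f(x) + y g(y)`, and it is a nonunit in `R` exactly when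
`c = 0`. Pulling the largest powers of `x` and `y` out of the two parts leaves `x^α`, `y^β`, or
`x^α q(x) + y^β r(y)` times a unit, with `q(0), r(0) ≠ 0`; since `x` kills `r(y) - r(0)` and `y`
kills `q(x) - q(0)`, the last one is `x^α + (r(0)/q(0)) y^β` times the unit
`q(x) - q(0) + (q(0)/r(0)) r(y)`.

For uniqueness, restrict to the two branches of the node: the maps `R → ℂ⟦t⟧` with
`(x, y) ↦ (t, 0)` and `(x, y) ↦ (0, t)` send `x^α + a y^β` to `t^α` and `a t^β`. The orders of
these images are invariant under associates, which fixes the shape and the exponents. If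
`u (x^α + a y^β) = x^α + a' y^β`, the first branch forces `u(0) = 1`, and then the second gives
`a = a'`.
-/

open scoped Polynomial PowerSeries

theorem Polynomial.exists_mul_aeval_eq_pow_mul_aeval {K S : Type*} [CommRing K] [CommRing S]
    [Algebra K S] (u : S) {f : K[X]} (hf : f ≠ 0) :
    ∃ (α : ℕ) (q : K[X]), 1 ≤ α ∧ q.coeff 0 ≠ 0 ∧
      u * Polynomial.aeval u f = u ^ α * Polynomial.aeval u q := by
  obtain ⟨q, hfq, hq⟩ := f.exists_eq_pow_rootMultiplicity_mul_and_not_dvd hf 0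
  rw [map_zero, sub_zero] at hfq hq
  generalize f.rootMultiplicity 0 = n at hfq
  subst hfq
  refine ⟨n + 1, q, le_add_self, fun h => hq (Polynomial.X_dvd_iff.mpr h), ?_⟩
  rw [map_mul, map_pow, Polynomial.aeval_X, pow_succ', mul_assoc]

section ProductZero

variable {K S : Type*} [CommRing K] [CommRing S] [Algebra K S] {u v : S}

theorem Polynomial.mul_aeval_of_mul_eq_zero (huv : u * v = 0) (p : K[X]) :
    u * Polynomial.aeval v p = algebraMap K S (p.coeff 0) * u := by
  conv_lhs => rw [← p.X_mul_divX_add]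
  simp only [map_add, map_mul, Polynomial.aeval_X, Polynomial.aeval_C]
  linear_combination Polynomial.aeval v p.divX * huv

theorem MvPolynomial.exists_aeval_eq_of_mul_eq_zero (huv : u * v = 0)
    (p : MvPolynomial (Fin 2) K) :
    ∃ (c : K) (f g : K[X]), aeval ![u, v] p =
      algebraMap K S c + u * Polynomial.aeval u f + v * Polynomial.aeval v g := by
  induction p using MvPolynomial.induction_on with
  | C c => exact ⟨c, 0, 0, by simp⟩
  | add p q hp hq =>
    obtain ⟨c, f, g, hp⟩ := hp
    obtain ⟨c', f', g', hq⟩ := hq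
    exact ⟨c + c', f + f', g + g', by simp only [map_add, hp, hq]; ring⟩
  | mul_X p i hp =>
    obtain ⟨c, f, g, hp⟩ := hp
    fin_cases i
    · refine ⟨0, Polynomial.C c + Polynomial.X * f, 0, ?_⟩
      simp only [Fin.zero_eta, map_mul, hp, aeval_X, Matrix.cons_val_zero, map_zero, map_add,
        Polynomial.aeval_C, Polynomial.aeval_X, zero_add, mul_zero, add_zero]
      linear_combination (Polynomial.aeval v g) * huv
    · refine ⟨0, 0, Polynomial.C c + Polynomial.X * g, ?_⟩
      simp only [Fin.mk_one, map_mul, hp, aeval_X, Matrix.cons_val_one, Matrix.cons_val_fin_one,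
        map_zero, map_add, Polynomial.aeval_C, Polynomial.aeval_X, zero_add, mul_zero, add_zero]
      linear_combination (Polynomial.aeval u f) * huv

theorem mul_add_mul_eq_mul_of_mul_eq_algebraMap_mul {K : Type*} [Field K] [Algebra K S]
    {P Q : S} {p q : K} (hp : p ≠ 0) (hq : q ≠ 0)
    (huQ : u * Q = algebraMap K S q * u) (hvP : v * P = algebraMap K S p * v) :
    u * P + v * Q =
      (P - algebraMap K S p + algebraMap K S (p / q) * Q) * (u + algebraMap K S (q / p) * v) := by
  have hpq : algebraMap K S (p / q) * algebraMap K S q = algebraMap K S p := by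
    rw [← map_mul, div_mul_cancel₀ _ hq]
  have hqp : algebraMap K S (p / q) * algebraMap K S (q / p) = 1 := by
    rw [← map_mul, div_mul_div_comm, mul_comm p q, div_self (mul_ne_zero hq hp), map_one]
  linear_combination (-algebraMap K S (p / q)) * huQ - algebraMap K S (q / p) * hvP - u * hpq
    - Q * v * hqp

end ProductZero

theorem PowerSeries.order_eq_of_associated {R : Type*} [Semiring R] [NoZeroDivisors R]
    [Nontrivial R] {p q : R⟦X⟧} (h : Associated p q) : p.order = q.order := by
  obtain ⟨u, rfl⟩ := h
  rw [PowerSeries.order_mul, PowerSeries.order_zero_of_unit u.isUnit, add_zero]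

theorem PowerSeries.eq_and_constantCoeff_eq_of_X_pow_mul_eq_C_mul_X_pow {R : Type*} [Semiring R]
    [Nontrivial R] {v : R⟦X⟧} (hv : IsUnit v) {n m : ℕ} {c : R}
    (h : PowerSeries.X ^ n * v = PowerSeries.C c * PowerSeries.X ^ m) :
    n = m ∧ PowerSeries.constantCoeff v = c := by
  have hn := congrArg (PowerSeries.coeff n) h
  rw [PowerSeries.coeff_X_pow_mul', if_pos le_rfl, Nat.sub_self,
    PowerSeries.coeff_zero_eq_constantCoeff, PowerSeries.coeff_C_mul_X_pow] at hn
  split_ifs at hn with hnm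
  · exact ⟨hnm, hn⟩
  · exact absurd hn (hv.map PowerSeries.constantCoeff).ne_zero

theorem IsLocalization.exists_associated_algebraMap {R S : Type*} [CommSemiring R]
    [CommSemiring S] [Algebra R S] (M : Submonoid R) [IsLocalization M S] (z : S) :
    ∃ a : R, Associated z (algebraMap R S a) := by
  obtain ⟨a, s, rfl⟩ := IsLocalization.exists_mk'_eq M z
  exact ⟨a, (IsLocalization.map_units S s).unit, IsLocalization.mk'_spec S a s⟩

namespace Rnode

theorem x_mul_y : x * y = 0 := by
  have hA : xA * yA = 0 := by
    rw [xA, yA, ← map_mul, Ideal.Quotient.eq_zero_iff_mem]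
    exact Ideal.subset_span rfl
  rw [x, y, ← map_mul, hA, map_zero]

/- The `•` that elaborates on `Rnode` is the action `Localization` inherits from `ℂ` acting on
`Anode`, not the one of the `Algebra ℂ Rnode` instance above, so this is not `Algebra.smul_def`. -/
theorem smul_eq_algebraMap_mul (a : ℂ) (w : Rnode) : a • w = algebraMap ℂ Rnode a * w := by
  rw [← smul_one_mul, ← Localization.mk_one, Localization.smul_mk,
    Localization.mk_one_eq_algebraMap]
  exact congrArg (algebraMap Anode Rnode · * w) (Algebra.algebraMap_eq_smul_one a).symm

theorem mem_primeCompl_iff (a : Anode) : a ∈ mA.primeCompl ↔ εA a ≠ 0 := by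
  rw [Ideal.mem_primeCompl_iff, mA_eq_ker, RingHom.mem_ker]

def ε : Rnode →+* ℂ :=
  IsLocalization.lift (M := mA.primeCompl) fun s =>
    isUnit_iff_ne_zero.mpr ((mem_primeCompl_iff s).mp s.2)

theorem ε_algebraMap (a : Anode) : ε (algebraMap Anode Rnode a) = εA a :=
  IsLocalization.lift_eq _ a

@[simp] theorem ε_x : ε x = 0 := by
  simp [x, ε_algebraMap, xA, εA, evalO]

@[simp] theorem ε_y : ε y = 0 := by
  simp [y, ε_algebraMap, yA, εA, evalO]

@[simp] theorem ε_algebraMap_complex (c : ℂ) : ε (algebraMap ℂ Rnode c) = c := by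
  rw [RingHom.algebraMap_toAlgebra, RingHom.comp_apply, ε_algebraMap]
  show εA (Ideal.Quotient.mk nodeIdeal (C c)) = c
  simp [εA, evalO]

theorem ε_aeval (z : Rnode) (p : ℂ[X]) : ε (Polynomial.aeval z p) = p.eval (ε z) := by
  have : ε.comp (algebraMap ℂ Rnode) = RingHom.id ℂ := RingHom.ext ε_algebraMap_complex
  rw [Polynomial.aeval_def, Polynomial.hom_eval₂, this]
  rfl

theorem maximalIdeal_eq_ker_ε : IsLocalRing.maximalIdeal Rnode = RingHom.ker ε := by
  refine le_antisymm ?_ (IsLocalRing.le_maximalIdeal (RingHom.ker_ne_top ε))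
  rw [← IsLocalization.AtPrime.map_eq_maximalIdeal mA, Ideal.map_le_iff_le_comap]
  intro a ha
  rw [mA_eq_ker, RingHom.mem_ker] at ha
  rwa [Ideal.mem_comap, RingHom.mem_ker, ε_algebraMap]

theorem isUnit_iff_ε_ne_zero (z : Rnode) : IsUnit z ↔ ε z ≠ 0 := by
  rw [← IsLocalRing.notMem_maximalIdeal, maximalIdeal_eq_ker_ε, RingHom.mem_ker]

theorem algebraMap_mk_eq_aeval (p : Pc) :
    algebraMap Anode Rnode (Ideal.Quotient.mk nodeIdeal p) = aeval ![x, y] p := by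
  induction p using MvPolynomial.induction_on with
  | C c => exact (aeval_C _ c).symm
  | add p q hp hq => simp only [map_add, hp, hq]
  | mul_X p i hp => fin_cases i <;> simp [hp, x, y, xA, yA]

theorem exists_associated_algebraMap_add_x_mul_add_y_mul (z : Rnode) :
    ∃ (c : ℂ) (f g : ℂ[X]), Associated z
      (algebraMap ℂ Rnode c + x * Polynomial.aeval x f + y * Polynomial.aeval y g) := by
  obtain ⟨a, hza⟩ := IsLocalization.exists_associated_algebraMap mA.primeCompl z
  obtain ⟨p, rfl⟩ := Ideal.Quotient.mk_surjective a
  obtain ⟨c, f, g, hp⟩ :=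
    MvPolynomial.exists_aeval_eq_of_mul_eq_zero (K := ℂ) (S := Rnode) x_mul_y p
  rw [algebraMap_mk_eq_aeval, hp] at hza
  exact ⟨c, f, g, hza⟩

theorem isUnit_aeval {z : Rnode} (hz : ε z = 0) {q : ℂ[X]} (hq : q.coeff 0 ≠ 0) :
    IsUnit (Polynomial.aeval z q) := by
  rwa [isUnit_iff_ε_ne_zero, ε_aeval, hz, ← Polynomial.coeff_zero_eq_eval_zero]

theorem x_pow_mul_y {α : ℕ} (hα : 1 ≤ α) : x ^ α * y = 0 := by
  obtain ⟨α, rfl⟩ := Nat.exists_eq_add_of_le' hα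
  rw [pow_succ, mul_assoc, x_mul_y, mul_zero]

theorem y_pow_mul_x {β : ℕ} (hβ : 1 ≤ β) : y ^ β * x = 0 := by
  obtain ⟨β, rfl⟩ := Nat.exists_eq_add_of_le' hβ
  rw [pow_succ, mul_assoc, mul_comm y, x_mul_y, mul_zero]

theorem associated_x_pow_mul_aeval_add_y_pow_mul_aeval {α β : ℕ} (hα : 1 ≤ α) (hβ : 1 ≤ β)
    {q r : ℂ[X]} (hq : q.coeff 0 ≠ 0) (hr : r.coeff 0 ≠ 0) :
    Associated (x ^ α * Polynomial.aeval x q + y ^ β * Polynomial.aeval y r)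
      (x ^ α + (r.coeff 0 / q.coeff 0) • y ^ β) := by
  rw [mul_add_mul_eq_mul_of_mul_eq_algebraMap_mul (S := Rnode) hq hr
      (Polynomial.mul_aeval_of_mul_eq_zero (x_pow_mul_y hα) r)
      (Polynomial.mul_aeval_of_mul_eq_zero (y_pow_mul_x hβ) q),
    smul_eq_algebraMap_mul, mul_comm]
  refine associated_mul_unit_left _ _ ((isUnit_iff_ε_ne_zero _).mpr ?_)
  simp [ε_aeval, ← Polynomial.coeff_zero_eq_eval_zero, hr, hq]

def IsNormalForm (w : Rnode) : Prop :=
  (∃ α : ℕ, 1 ≤ α ∧ w = x ^ α) ∨ (∃ β : ℕ, 1 ≤ β ∧ w = y ^ β) ∨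
    (∃ α β : ℕ, ∃ a : ℂ, 1 ≤ α ∧ 1 ≤ β ∧ a ≠ 0 ∧ w = x ^ α + a • y ^ β)

theorem exists_isNormalForm_associated {z : Rnode} (hz : z ≠ 0) (hu : ¬IsUnit z) :
    ∃ w, IsNormalForm w ∧ Associated z w := by
  obtain ⟨c, f, g, hzw⟩ := exists_associated_algebraMap_add_x_mul_add_y_mul z
  obtain rfl : c = 0 := by
    obtain ⟨u, hzu⟩ := hzw
    rw [isUnit_iff_ε_ne_zero, not_not] at hu
    simpa [hu] using (congrArg ε hzu).symm
  rw [map_zero, zero_add] at hzw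
  rcases eq_or_ne f 0 with rfl | hf <;> rcases eq_or_ne g 0 with rfl | hg
  · exact absurd (by simpa using hzw) hz
  · obtain ⟨β, r, hβ, hr, hyg⟩ := Polynomial.exists_mul_aeval_eq_pow_mul_aeval y hg
    refine ⟨y ^ β, Or.inr (Or.inl ⟨β, hβ, rfl⟩), ?_⟩
    rw [map_zero, mul_zero, zero_add, hyg] at hzw
    exact hzw.trans (associated_mul_unit_left _ _ (isUnit_aeval ε_y hr))
  · obtain ⟨α, q, hα, hq, hxf⟩ := Polynomial.exists_mul_aeval_eq_pow_mul_aeval x hf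
    refine ⟨x ^ α, Or.inl ⟨α, hα, rfl⟩, ?_⟩
    rw [map_zero, mul_zero, add_zero, hxf] at hzw
    exact hzw.trans (associated_mul_unit_left _ _ (isUnit_aeval ε_x hq))
  · obtain ⟨α, q, hα, hq, hxf⟩ := Polynomial.exists_mul_aeval_eq_pow_mul_aeval x hf
    obtain ⟨β, r, hβ, hr, hyg⟩ := Polynomial.exists_mul_aeval_eq_pow_mul_aeval y hg
    refine ⟨_, Or.inr (Or.inr ⟨α, β, _, hα, hβ, div_ne_zero hr hq, rfl⟩), ?_⟩
    rw [hxf, hyg] at hzw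
    exact hzw.trans (associated_x_pow_mul_aeval_add_y_pow_mul_aeval hα hβ hq hr)

theorem nodeIdeal_le_ker_aeval_single (i : Fin 2) :
    nodeIdeal ≤ RingHom.ker (aeval (Pi.single i PowerSeries.X) : Pc →ₐ[ℂ] ℂ⟦X⟧) := by
  rw [nodeIdeal, Ideal.span_le, Set.singleton_subset_iff]
  fin_cases i <;> simp

def branchA (i : Fin 2) : Anode →+* ℂ⟦X⟧ :=
  Ideal.Quotient.lift nodeIdeal (aeval (Pi.single i PowerSeries.X) : Pc →ₐ[ℂ] ℂ⟦X⟧).toRingHom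
    (nodeIdeal_le_ker_aeval_single i)

theorem constantCoeff_comp_branchA (i : Fin 2) :
    PowerSeries.constantCoeff.comp (branchA i) = εA := by
  apply Ideal.Quotient.ringHom_ext
  apply MvPolynomial.ringHom_ext
  · intro c
    simp [branchA, εA, evalO]
  · intro j
    fin_cases i <;> fin_cases j <;> simp [branchA, εA, evalO]

/-- `branch 0` and `branch 1` restrict to the branches `y = 0` and `x = 0` of the node, expanded as
power series in the coordinate `x`, resp. `y`, of that branch. -/
def branch (i : Fin 2) : Rnode →+* ℂ⟦X⟧ :=
  IsLocalization.lift (M := mA.primeCompl) (g := branchA i) fun s => by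
    rw [PowerSeries.isUnit_iff_constantCoeff, ← RingHom.comp_apply, constantCoeff_comp_branchA]
    exact isUnit_iff_ne_zero.mpr ((mem_primeCompl_iff s).mp s.2)

theorem branch_algebraMap (i : Fin 2) (a : Anode) :
    branch i (algebraMap Anode Rnode a) = branchA i a :=
  IsLocalization.lift_eq _ a

theorem constantCoeff_branch (i : Fin 2) (z : Rnode) :
    PowerSeries.constantCoeff (branch i z) = ε z := by
  suffices PowerSeries.constantCoeff.comp (branch i) = ε from congrArg (· z) this
  apply IsLocalization.ringHom_ext mA.primeCompl
  rw [RingHom.comp_assoc, branch, ε, IsLocalization.lift_comp, IsLocalization.lift_comp,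
    constantCoeff_comp_branchA]

@[simp] theorem branch_x (i : Fin 2) :
    branch i x = Pi.single (M := fun _ => ℂ⟦X⟧) i PowerSeries.X 0 := by
  simp [x, xA, branch_algebraMap, branchA]

@[simp] theorem branch_y (i : Fin 2) :
    branch i y = Pi.single (M := fun _ => ℂ⟦X⟧) i PowerSeries.X 1 := by
  simp [y, yA, branch_algebraMap, branchA]

@[simp] theorem branch_smul (i : Fin 2) (a : ℂ) (w : Rnode) :
    branch i (a • w) = PowerSeries.C a * branch i w := by
  rw [smul_eq_algebraMap_mul, map_mul, RingHom.algebraMap_toAlgebra, RingHom.comp_apply,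
    branch_algebraMap]
  congr 1
  show branchA i (Ideal.Quotient.mk nodeIdeal (C a)) = _
  simp [branchA]

theorem branch_zero_x_pow_add_smul_y_pow {α β : ℕ} (hβ : 1 ≤ β) (a : ℂ) :
    branch 0 (x ^ α + a • y ^ β) = PowerSeries.X ^ α := by
  simp [Nat.one_le_iff_ne_zero.mp hβ]

theorem branch_one_x_pow_add_smul_y_pow {α β : ℕ} (hα : 1 ≤ α) (a : ℂ) :
    branch 1 (x ^ α + a • y ^ β) = PowerSeries.C a * PowerSeries.X ^ β := by
  simp [Nat.one_le_iff_ne_zero.mp hα]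

theorem eq_of_associated_x_pow_add_smul_y_pow {α β α' β' : ℕ} {a a' : ℂ} (hα : 1 ≤ α)
    (hβ : 1 ≤ β) (ha : a ≠ 0) (hα' : 1 ≤ α') (hβ' : 1 ≤ β')
    (h : Associated (x ^ α + a • y ^ β) (x ^ α' + a' • y ^ β')) :
    α = α' ∧ β = β' ∧ a = a' := by
  obtain ⟨u, hu⟩ := h
  have h0 := congrArg (branch 0) hu
  have h1 := congrArg (branch 1) hu
  rw [map_mul, branch_zero_x_pow_add_smul_y_pow hβ, branch_zero_x_pow_add_smul_y_pow hβ'] at h0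
  rw [map_mul, branch_one_x_pow_add_smul_y_pow hα, branch_one_x_pow_add_smul_y_pow hα'] at h1
  obtain ⟨rfl, hε⟩ := PowerSeries.eq_and_constantCoeff_eq_of_X_pow_mul_eq_C_mul_X_pow
    (u.isUnit.map (branch 0)) (c := 1) (by rw [map_one, one_mul, h0])
  obtain ⟨rfl, hε'⟩ := PowerSeries.eq_and_constantCoeff_eq_of_X_pow_mul_eq_C_mul_X_pow
    ((ha.isUnit.map PowerSeries.C).mul (u.isUnit.map (branch 1))) (by rw [← h1]; ring)
  rw [constantCoeff_branch] at hε
  rw [map_mul, PowerSeries.constantCoeff_C, constantCoeff_branch, hε, mul_one] at hε'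
  exact ⟨rfl, rfl, hε'⟩

theorem IsNormalForm.eq_of_associated {w w' : Rnode} (hw : IsNormalForm w) (hw' : IsNormalForm w')
    (h : Associated w w') : w = w' := by
  have h0 := PowerSeries.order_eq_of_associated (h.map (branch 0))
  have h1 := PowerSeries.order_eq_of_associated (h.map (branch 1))
  rcases hw with ⟨α, hα, rfl⟩ | ⟨β, hβ, rfl⟩ | ⟨α, β, a, hα, hβ, ha, rfl⟩ <;>
    rcases hw' with ⟨α', hα', rfl⟩ | ⟨β', hβ', rfl⟩ | ⟨α', β', a', hα', hβ', ha', rfl⟩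
  case inr.inr.inr.inr =>
    obtain ⟨rfl, rfl, rfl⟩ := eq_of_associated_x_pow_add_smul_y_pow hα hβ ha hα' hβ' h
    rfl
  all_goals simp_all [Nat.one_le_iff_ne_zero.mp, PowerSeries.order_X_pow, @eq_comm ℕ∞ ⊤,
    PowerSeries.order_eq_top]

end Rnode

theorem classification_of_nonunits (z : Rnode) (hz : z ≠ 0) (hu : ¬ IsUnit z) :
    (∃! w : Rnode,
      ((∃ α : ℕ, 1 ≤ α ∧ w = x ^ α) ∨
        (∃ β : ℕ, 1 ≤ β ∧ w = y ^ β) ∨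
        (∃ α β : ℕ, ∃ a : ℂ, 1 ≤ α ∧ 1 ≤ β ∧ a ≠ 0 ∧ w = x ^ α + a • y ^ β)) ∧
      Associated z w) ∧
    (∀ α β : ℕ, ∀ a : ℂ, ∀ α' β' : ℕ, ∀ a' : ℂ,
      1 ≤ α → 1 ≤ β → a ≠ 0 → 1 ≤ α' → 1 ≤ β' → a' ≠ 0 →
      Associated z (x ^ α + a • y ^ β) → Associated z (x ^ α' + a' • y ^ β') →
      α = α' ∧ β = β' ∧ a = a') := by
  obtain ⟨w, hw, hzw⟩ := Rnode.exists_isNormalForm_associated hz hu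
  refine ⟨⟨w, ⟨hw, hzw⟩, fun w' ⟨hw', hzw'⟩ =>
    Rnode.IsNormalForm.eq_of_associated hw' hw (hzw'.symm.trans hzw)⟩, ?_⟩
  intro α β a α' β' a' hα hβ ha hα' hβ' _ h h'
  exact Rnode.eq_of_associated_x_pow_add_smul_y_pow hα hβ ha hα' hβ' (h.symm.trans h')

end
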